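/- The operators ξ_{i,r}, x⁺_{i,r}, x⁻_{i,r} on V satisfy the defining relations of the Yangian Y_ħ(sl_n): for all 1 ≤ i, j ≤ n−1 and all integers r, s ≥ 0, (Y1) [ξ_{i,r}, ξ_{j,s}] = 0; (Y2) [ξ_{i,0}, x^±_{j,s}] = ±a_{ij}·x^±_{j,s}; (Y3) [ξ_{i,r+1}, x^±_{j,s}] − [ξ_{i,r}, x^±_{j,s+1}] = ±(ħ·a_{ij}/2)·(ξ_{i,r} x^±_{j,s} + x^±_{j,s} ξ_{i,r}); (Y4) [x^±_{i,r+1}, x^±_{j,s}] − [x^±_{i,r}, x^±_{j,s+1}] = ±(ħ·a_{ij}/2)·(x^±_{i,r} x^±_{j,s} + x^±_{j,s} x^±_{i,r}); (Y5) [x⁺_{i,r}, x⁻_{j,s}] = δ_{ij}·ξ_{i,r+s}. Moreover, the vector Ω = |(1, 2, …, m)⟩ satisfies x⁺_{i,r}Ω = 0 for all i, r, and ξ_{i,r}Ω = δ_{i,m}·a^r·Ω for all i, r. -/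

import Mathlib

noncomputable section

open scoped Classical

namespace YangianSlnFund

/-- The index set: strictly increasing `m`-tuples with entries in `{1, …, n}`
(realized as strictly monotone maps `Fin m → Fin n`). -/
abbrev Idx (n m : ℕ) := {p : Fin m → Fin n // StrictMono p}

noncomputable instance (n m : ℕ) : Fintype (Idx n m) := Fintype.ofFinite _

/-- The (1-based) value of the tuple `p` at the (0-based) position `k`. -/
def pv {n m : ℕ} (p : Idx n m) (k : Fin m) : ℕ := (p.val k).val + 1

/-- `i` occurs among the entries of `p`. -/
def Occurs {n m : ℕ} (p : Idx n m) (i : ℕ) : Prop := ∃ k : Fin m, pv p k = i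

/-- `b_{i,k} = a + (ħ/2)(m + i − 2k)`. -/
def bval (m : ℕ) (hbar a : ℂ) (i k : ℕ) : ℂ :=
  a + (hbar / 2) * ((m : ℂ) + (i : ℂ) - 2 * (k : ℂ))

/-- Matrix of `ξ_{i,r}` in the basis `{|p⟩}`. -/
def xiMat (n m : ℕ) (hbar a : ℂ) (i r : ℕ) : Matrix (Idx n m) (Idx n m) ℂ :=
  fun q p =>
    if q = p then
      (∑ k : Fin m,
          if pv p k = i ∧ ¬ Occurs p (i + 1) then (bval m hbar a i (k.val + 1)) ^ r else 0) -
        (∑ k : Fin m,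
          if pv p k = i + 1 ∧ ¬ Occurs p i then (bval m hbar a i (k.val + 1)) ^ r else 0)
    else 0

/-- Matrix of `x⁺_{i,r}`: it sends `|p⟩` with `p_k = i+1`, `i ∉ p`, to
`b_{i,k}^r |p′⟩` where `p′` replaces the entry `i+1` by `i`. -/
def xpMat (n m : ℕ) (hbar a : ℂ) (i r : ℕ) : Matrix (Idx n m) (Idx n m) ℂ :=
  fun q p =>
    ∑ k : Fin m,
      if pv p k = i + 1 ∧ ¬ Occurs p i ∧ pv q k = i ∧
          (∀ l : Fin m, l ≠ k → q.val l = p.val l) then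
        (bval m hbar a i (k.val + 1)) ^ r
      else 0

/-- Matrix of `x⁻_{i,r}`: it sends `|p⟩` with `p_k = i`, `i+1 ∉ p`, to
`b_{i,k}^r |p″⟩` where `p″` replaces the entry `i` by `i+1`. -/
def xmMat (n m : ℕ) (hbar a : ℂ) (i r : ℕ) : Matrix (Idx n m) (Idx n m) ℂ :=
  fun q p =>
    ∑ k : Fin m,
      if pv p k = i ∧ ¬ Occurs p (i + 1) ∧ pv q k = i + 1 ∧
          (∀ l : Fin m, l ≠ k → q.val l = p.val l) then
        (bval m hbar a i (k.val + 1)) ^ r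
      else 0

/-- The operator `ξ_{i,r}` on `V`. -/
def Xi (n m : ℕ) (hbar a : ℂ) (i r : ℕ) : Module.End ℂ (Idx n m → ℂ) :=
  Matrix.toLin' (xiMat n m hbar a i r)

/-- The operator `x⁺_{i,r}` on `V`. -/
def Xp (n m : ℕ) (hbar a : ℂ) (i r : ℕ) : Module.End ℂ (Idx n m → ℂ) :=
  Matrix.toLin' (xpMat n m hbar a i r)

/-- The operator `x⁻_{i,r}` on `V`. -/
def Xm (n m : ℕ) (hbar a : ℂ) (i r : ℕ) : Module.End ℂ (Idx n m → ℂ) :=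
  Matrix.toLin' (xmMat n m hbar a i r)

/-- The entries of the Cartan matrix of `sl_n`. -/
def cartan (i j : ℕ) : ℂ :=
  if i = j then 2 else if i + 1 = j ∨ j + 1 = i then -1 else 0

/-- The highest-weight tuple `(1, 2, …, m)`. -/
def pOmega (n m : ℕ) (h : m ≤ n) : Idx n m :=
  ⟨fun k => ⟨k.val, lt_of_lt_of_le k.isLt h⟩, fun a b hab => by
    simp only [Fin.mk_lt_mk]; exact hab⟩

/-- The highest-weight vector `Ω = |(1, …, m)⟩`. -/
def Omega (n m : ℕ) (h : m ≤ n) : Idx n m → ℂ := Pi.single (pOmega n m h) 1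


/-!
In the basis `|p⟩` the operator `ξ_{i,r}` is diagonal, and `x⁺_{i,r}` has the entry `b_{i,k}^r` at
`(q, p)` exactly when `q` arises from `p` by lowering the entry `i + 1` at position `k` to `i`;
`x⁻_{i,r}` is the transpose of `x⁺_{i,r}`, so every `x⁻` relation is the transpose of an `x⁺` one.

(Y2) and (Y3) then reduce to comparing the `ξ_i`-eigenvalues of `p` and `q` across one lowering
move. In a product of two such operators the intermediate tuple is determined by one end and the
position of the move. Moves for non-adjacent indices commute, which settles the far cases of (Y4)
and (Y5). For adjacent `i`, `j` the two moves act at the same position or at consecutive ones, so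
along every nonzero term `b_{j,k} = b_{i,l} + ħ/2`, and (Y4) holds term by term; for adjacent
indices both products in (Y5) vanish, and for `i = j` they are diagonal with difference
`ξ_{i,r+s}`. Finally `(1, …, m)` contains `i` whenever it contains `i + 1`, so no lowering move
applies to it.
-/

open scoped Matrix

lemma strictMono_update {α β : Type*} [DecidableEq α] [Preorder α] [Preorder β] {f : α → β}
    (hf : StrictMono f) {k : α} {w : β} (hlt : ∀ t < k, f t < w) (hgt : ∀ t, k < t → w < f t) :
    StrictMono (Function.update f k w) := by
  intro s t hst
  by_cases hs : s = k <;> by_cases ht : t = k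
  · exact absurd (hs.trans ht.symm ▸ hst) (lt_irrefl _)
  · subst hs; simpa [ht] using hgt t hst
  · subst ht; simpa [hs] using hlt s hst
  · simpa [hs, ht] using hf hst

section

variable {ι κ R : Type*} [Fintype ι]

lemma mul_apply_eq_sum_sum_ite [Fintype κ] [CommSemiring R]
    {A B : Matrix ι ι R} {P Q : ι → ι → κ → Prop} {f g : κ → R}
    (hA : ∀ q x, A q x = ∑ l, if P q x l then f l else 0)
    (hB : ∀ x p, B x p = ∑ k, if Q x p k then g k else 0)
    (hQ : ∀ p k x y, Q x p k → Q y p k → x = y) (q p : ι) :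
    (A * B) q p = ∑ l, ∑ k, if ∃ x, P q x l ∧ Q x p k then f l * g k else 0 := by
  simp_rw [Matrix.mul_apply, hA, hB, Finset.sum_mul_sum, ite_zero_mul_ite_zero]
  rw [Finset.sum_comm]
  refine Finset.sum_congr rfl fun l _ => ?_
  rw [Finset.sum_comm]
  refine Finset.sum_congr rfl fun k _ => ?_
  rw [Finset.sum_ite_zero _ _ (fun x _ y _ hx hy => hQ p k x y hx.2 hy.2)]
  simp

lemma transpose_commutator_eq_smul [CommRing R] {A B : Matrix ι ι R} {c : R}
    (h : A * B - B * A = c • B) :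
    Aᵀ * Bᵀ - Bᵀ * Aᵀ = (-c) • Bᵀ := by
  rw [neg_smul, ← Matrix.transpose_smul, ← h]
  simp only [Matrix.transpose_sub, Matrix.transpose_mul, neg_sub]

lemma transpose_shifted_commutator_eq_smul [CommRing R] {A A' B B' : Matrix ι ι R} {c : R}
    (h : (A' * B - B * A') - (A * B' - B' * A) = c • (A * B + B * A)) :
    (A'ᵀ * Bᵀ - Bᵀ * A'ᵀ) - (Aᵀ * B'ᵀ - B'ᵀ * Aᵀ) = (-c) • (Aᵀ * Bᵀ + Bᵀ * Aᵀ) := by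
  have h' := congrArg Matrix.transpose h
  simp only [Matrix.transpose_sub, Matrix.transpose_add, Matrix.transpose_smul,
    Matrix.transpose_mul] at h'
  rw [neg_smul, add_comm, ← h']
  abel

lemma toLin'_mul_eq_mul [DecidableEq ι] [CommSemiring R] (A B : Matrix ι ι R) :
    Matrix.toLin' (A * B) = Matrix.toLin' A * Matrix.toLin' B :=
  Matrix.toLin'_mul A B

end

variable {n m : ℕ}

lemma pv_injective (p : Idx n m) : Function.Injective (pv p) := fun k l h =>
  p.2.injective (Fin.ext (by unfold pv at h; omega))

lemma pv_pos (p : Idx n m) (k : Fin m) : 1 ≤ pv p k := Nat.le_add_left 1 _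

lemma pv_le (p : Idx n m) (k : Fin m) : pv p k ≤ n := (p.val k).isLt

lemma pv_lt_pv_iff (p : Idx n m) {k l : Fin m} : pv p k < pv p l ↔ k < l := by
  rw [pv, pv, add_lt_add_iff_right, ← Fin.lt_def]
  exact p.2.lt_iff_lt

lemma pv_strictMono (p : Idx n m) : StrictMono (pv p) := fun _ _ => (pv_lt_pv_iff p).2

lemma ext_pv {p q : Idx n m} (h : pv p = pv q) : p = q :=
  Subtype.ext (funext fun k => Fin.ext (by simpa [pv] using congrFun h k))

lemma pv_eq_pv_iff {p q : Idx n m} {k : Fin m} : pv q k = pv p k ↔ q.val k = p.val k := by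
  rw [pv, pv, add_left_inj, Fin.val_inj]

lemma pv_eq_iff_eq {p : Idx n m} {k t : Fin m} {v : ℕ} (hk : pv p k = v) : pv p t = v ↔ t = k :=
  ⟨fun ht => pv_injective p (ht.trans hk.symm), fun ht => ht ▸ hk⟩

lemma exists_pv_eq {f : Fin m → ℕ} (hf : StrictMono f) (h1 : ∀ k, 1 ≤ f k) (hn : ∀ k, f k ≤ n) :
    ∃ p : Idx n m, pv p = f :=
  ⟨⟨fun k => ⟨f k - 1, by have := h1 k; have := hn k; omega⟩, fun k l hkl => by
      have := hf hkl; have := h1 k; simp only [Fin.mk_lt_mk]; omega⟩,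
    funext fun k => by have := h1 k; simp only [pv]; omega⟩

lemma exists_pv_eq_update (p : Idx n m) {k : Fin m} {w : ℕ} (h1 : 1 ≤ w) (hn : w ≤ n)
    (hlt : ∀ t < k, pv p t < w) (hgt : ∀ t, k < t → w < pv p t) :
    ∃ q : Idx n m, pv q = Function.update (pv p) k w :=
  exists_pv_eq (strictMono_update (pv_strictMono p) hlt hgt)
    (fun t => by rcases eq_or_ne t k with rfl | ht <;> simp [*, pv_pos])
    (fun t => by rcases eq_or_ne t k with rfl | ht <;> simp [*, pv_le])

lemma val_eq_succ_of_pv {p : Idx n m} {k l : Fin m} {v : ℕ} (hk : pv p k = v)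
    (hl : pv p l = v + 1) : l.val = k.val + 1 := by
  have hkl : k < l := (pv_lt_pv_iff p).1 (by omega)
  by_contra hne
  have hk' : k.val + 1 < m := by have := l.isLt; rw [Fin.lt_def] at hkl; omega
  have h1 := (pv_lt_pv_iff p).2 (show k < ⟨k.val + 1, hk'⟩ by rw [Fin.lt_def]; simp)
  have h2 := (pv_lt_pv_iff p).2 (show (⟨k.val + 1, hk'⟩ : Fin m) < l by
    rw [Fin.lt_def] at hkl ⊢; simp only; omega)
  omega

def Lowers (v : ℕ) (k : Fin m) (p q : Idx n m) : Prop :=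
  pv p k = v + 1 ∧ pv q = Function.update (pv p) k v

namespace Lowers

variable {v : ℕ} {k : Fin m} {p q : Idx n m}

lemma pv_right (h : Lowers v k p q) : pv q k = v := by simp [h.2]

lemma pv_of_ne (h : Lowers v k p q) {t : Fin m} (ht : t ≠ k) : pv q t = pv p t := by
  simp [h.2, ht]

lemma pv_left (h : Lowers v k p q) : pv p = Function.update (pv q) k (v + 1) := by
  rw [h.2, Function.update_idem, ← h.1, Function.update_eq_self]

lemma one_le (h : Lowers v k p q) : 1 ≤ v := h.pv_right ▸ pv_pos q k

lemma lt (h : Lowers v k p q) : v < n := by have := pv_le p k; rw [h.1] at this; omega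

lemma not_occurs (h : Lowers v k p q) : ¬ Occurs p v := by
  rintro ⟨t, ht⟩
  have htk : t ≠ k := by rintro rfl; rw [h.1] at ht; omega
  exact htk (pv_injective q ((h.pv_of_ne htk).trans (ht.trans h.pv_right.symm)))

lemma not_occurs_succ (h : Lowers v k p q) : ¬ Occurs q (v + 1) := by
  rintro ⟨t, ht⟩
  have htk : t ≠ k := by rintro rfl; rw [h.pv_right] at ht; omega
  exact htk (pv_injective p ((h.pv_of_ne htk).symm.trans (ht.trans h.1.symm)))

lemma pv_eq_iff (h : Lowers v k p q) {w : ℕ} (hw : w ≠ v) (hw' : w ≠ v + 1) (t : Fin m) :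
    pv q t = w ↔ pv p t = w := by
  rcases eq_or_ne t k with rfl | ht
  · rw [h.pv_right, h.1]; omega
  · rw [h.pv_of_ne ht]

lemma occurs_iff (h : Lowers v k p q) {w : ℕ} (hw : w ≠ v) (hw' : w ≠ v + 1) :
    Occurs q w ↔ Occurs p w :=
  exists_congr (h.pv_eq_iff hw hw')

lemma unique_right {k' : Fin m} {q' : Idx n m} (h : Lowers v k p q) (h' : Lowers v k' p q') :
    q = q' := by
  obtain rfl : k = k' := pv_injective p (h.1.trans h'.1.symm)
  exact ext_pv (h.2.trans h'.2.symm)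

lemma unique_left {k' : Fin m} {p' : Idx n m} (h : Lowers v k p q) (h' : Lowers v k' p' q) :
    p = p' := by
  obtain rfl : k = k' := pv_injective q (h.pv_right.trans h'.pv_right.symm)
  exact ext_pv (h.pv_left.trans h'.pv_left.symm)

end Lowers

lemma exists_lowers {p : Idx n m} {k : Fin m} {v : ℕ} (hk : pv p k = v + 1)
    (hv : ¬ Occurs p v) (h1 : 1 ≤ v) : ∃ q, Lowers v k p q := by
  have hne : ∀ t, pv p t ≠ v := fun t ht => hv ⟨t, ht⟩
  obtain ⟨q, hq⟩ := exists_pv_eq_update p (k := k) (w := v) h1 (by have := pv_le p k; omega)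
    (fun t ht => by have := pv_strictMono p ht; have := hne t; omega)
    (fun t ht => by have := pv_strictMono p ht; omega)
  exact ⟨q, hk, hq⟩

lemma exists_raises {q : Idx n m} {k : Fin m} {v : ℕ} (hk : pv q k = v)
    (hv : ¬ Occurs q (v + 1)) (hn : v < n) : ∃ p, Lowers v k p q := by
  have hne : ∀ t, pv q t ≠ v + 1 := fun t ht => hv ⟨t, ht⟩
  obtain ⟨p, hp⟩ := exists_pv_eq_update q (k := k) (w := v + 1) (by omega) hn
    (fun t ht => by have := pv_strictMono q ht; omega)
    (fun t ht => by have := pv_strictMono q ht; have := hne t; omega)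
  refine ⟨p, by simp [hp], ?_⟩
  rw [hp, Function.update_idem, ← hk, Function.update_eq_self]

namespace Lowers

variable {i j : ℕ} {k l : Fin m} {p q x y : Idx n m}

lemma exchange (hx : Lowers j k p x) (hq : Lowers i l x q) (hadj : ¬ (i + 1 = j ∨ j + 1 = i)) :
    ∃ y, Lowers i l p y ∧ Lowers j k y q := by
  have hlk : l ≠ k := by rintro rfl; have := hq.1; rw [hx.pv_right] at this; omega
  have hpi : ¬ Occurs p i := by
    rintro ⟨t, ht⟩
    rcases eq_or_ne t k with rfl | htk
    · rw [hx.1] at ht; omega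
    · exact hq.not_occurs ⟨t, (hx.pv_of_ne htk).trans ht⟩
  obtain ⟨y, hy⟩ := exists_lowers ((hx.pv_of_ne hlk).symm.trans hq.1) hpi hq.one_le
  refine ⟨y, hy, (hy.pv_of_ne hlk.symm).trans hx.1, ?_⟩
  rw [hq.2, hx.2, hy.2, Function.update_comm hlk.symm]

lemma diamond_down (hq : Lowers i l x q) (hp : Lowers j k x p) (hij : i ≠ j) :
    ∃ y, Lowers j k q y ∧ Lowers i l p y := by
  have hlk : l ≠ k := by rintro rfl; have := hq.1; rw [hp.1] at this; omega
  have hpi : ¬ Occurs p i := by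
    rintro ⟨t, ht⟩
    rcases eq_or_ne t k with rfl | htk
    · rw [hp.pv_right] at ht; exact hij ht.symm
    · exact hq.not_occurs ⟨t, (hp.pv_of_ne htk).symm.trans ht⟩
  obtain ⟨y, hy⟩ := exists_lowers ((hp.pv_of_ne hlk).trans hq.1) hpi hq.one_le
  refine ⟨y, ⟨(hq.pv_of_ne hlk.symm).trans hp.1, ?_⟩, hy⟩
  rw [hy.2, hp.2, hq.2, Function.update_comm hlk.symm]

lemma diamond_up (hy : Lowers j k q y) (hy' : Lowers i l p y) (hij : i ≠ j) :
    ∃ x, Lowers i l x q ∧ Lowers j k x p := by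
  have hlk : l ≠ k := by rintro rfl; have := hy'.pv_right; rw [hy.pv_right] at this; omega
  have hqi : ¬ Occurs q (i + 1) := by
    rintro ⟨t, ht⟩
    rcases eq_or_ne t k with rfl | htk
    · rw [hy.1] at ht; omega
    · exact hy'.not_occurs_succ ⟨t, (hy.pv_of_ne htk).trans ht⟩
  obtain ⟨x, hx⟩ := exists_raises ((hy.pv_of_ne hlk).symm.trans hy'.pv_right) hqi hy'.lt
  refine ⟨x, hx, ?_, ?_⟩
  · rw [hx.pv_left, Function.update_of_ne hlk.symm, hy.1]
  · rw [hy'.pv_left, hy.2, hx.pv_left, Function.update_comm hlk.symm]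

end Lowers

section Weights

variable {hbar a : ℂ}

lemma bval_succ_left (i k : ℕ) : bval m hbar a (i + 1) k = bval m hbar a i k + hbar / 2 := by
  unfold bval; push_cast; ring

lemma bval_succ_succ (i k : ℕ) : bval m hbar a (i + 1) (k + 1) = bval m hbar a i k - hbar / 2 := by
  unfold bval; push_cast; ring

variable {i j r : ℕ} {k : Fin m} {p q : Idx n m}

lemma bval_of_lowers_adjacent {l : Fin m} {x : Idx n m} (hadj : i + 1 = j ∨ j + 1 = i)
    (hx : Lowers j k p x) (hq : Lowers i l x q) :
    bval m hbar a j (k + 1) = bval m hbar a i (l + 1) + hbar / 2 := by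
  rcases hadj with rfl | rfl
  · obtain rfl : l = k := pv_injective x (hq.1.trans hx.pv_right.symm)
    exact bval_succ_left ..
  · have hlk : l ≠ k := by rintro rfl; have := hq.1; rw [hx.pv_right] at this; omega
    have hkl : l.val = k.val + 1 := val_eq_succ_of_pv hx.1 ((hx.pv_of_ne hlk).symm.trans hq.1)
    rw [hkl, bval_succ_succ]
    ring

lemma cartan_self (i : ℕ) : cartan i i = 2 := if_pos rfl

lemma cartan_of_adjacent {i j : ℕ} (h : i + 1 = j ∨ j + 1 = i) : cartan i j = -1 := by
  rw [cartan, if_neg (by omega), if_pos h]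

lemma cartan_of_far {i j : ℕ} (hij : i ≠ j) (h : ¬ (i + 1 = j ∨ j + 1 = i)) : cartan i j = 0 := by
  rw [cartan, if_neg hij, if_neg h]

lemma xiMat_self_of_lower (hk : pv p k = i)
    (h : ¬ Occurs p (i + 1)) : xiMat n m hbar a i r p p = bval m hbar a i (k + 1) ^ r := by
  have hi : Occurs p i := ⟨k, hk⟩
  simp [xiMat, pv_eq_iff_eq hk, h, hi]

lemma xiMat_self_of_upper (hk : pv p k = i + 1)
    (h : ¬ Occurs p i) : xiMat n m hbar a i r p p = -bval m hbar a i (k + 1) ^ r := by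
  have hi : Occurs p (i + 1) := ⟨k, hk⟩
  simp [xiMat, pv_eq_iff_eq hk, h, hi]

lemma xiMat_self_eq_zero (h : Occurs p i ↔ Occurs p (i + 1)) :
    xiMat n m hbar a i r p p = 0 := by
  by_cases hi : Occurs p i
  · simp [xiMat, hi, h.1 hi]
  · have hi' : ¬ Occurs p (i + 1) := fun h' => hi (h.2 h')
    simp only [xiMat, if_true]
    rw [Finset.sum_eq_zero fun t _ => if_neg fun ht => hi ⟨t, ht.1⟩,
      Finset.sum_eq_zero fun t _ => if_neg fun ht => hi' ⟨t, ht.1⟩, sub_zero]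

lemma xiMat_self_of_lowers_self (h : Lowers i k p q) (r : ℕ) :
    xiMat n m hbar a i r q q = bval m hbar a i (k + 1) ^ r ∧
      xiMat n m hbar a i r p p = -bval m hbar a i (k + 1) ^ r :=
  ⟨xiMat_self_of_lower h.pv_right h.not_occurs_succ, xiMat_self_of_upper h.1 h.not_occurs⟩

lemma xiMat_self_of_lowers_succ (h : Lowers (i + 1) k p q) :
    (∀ r, xiMat n m hbar a i r q q = 0 ∧
      xiMat n m hbar a i r p p = (bval m hbar a (i + 1) (k + 1) + hbar / 2) ^ r) ∨
    (∀ r, xiMat n m hbar a i r q q = -(bval m hbar a (i + 1) (k + 1) - hbar / 2) ^ r ∧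
      xiMat n m hbar a i r p p = 0) := by
  by_cases hp : Occurs p i
  · obtain ⟨l, hl⟩ := hp
    have hlk : l ≠ k := by rintro rfl; rw [h.1] at hl; omega
    have hql : pv q l = i := (h.pv_of_ne hlk).trans hl
    have hkl : k.val = l.val + 1 := val_eq_succ_of_pv hql h.pv_right
    refine Or.inl fun r => ⟨xiMat_self_eq_zero (iff_of_true ⟨l, hql⟩ ⟨k, h.pv_right⟩), ?_⟩
    rw [xiMat_self_of_lower hl h.not_occurs, hkl, bval_succ_succ, sub_add_cancel]
  · have hq : ¬ Occurs q i := by rwa [h.occurs_iff (by omega) (by omega)]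
    refine Or.inr fun r => ⟨?_, xiMat_self_eq_zero (iff_of_false hp h.not_occurs)⟩
    rw [xiMat_self_of_upper h.pv_right hq, bval_succ_left, add_sub_cancel_right]

lemma xiMat_self_of_lowers_pred (h : Lowers j k p q) :
    (∀ r, xiMat n m hbar a (j + 1) r q q = 0 ∧
      xiMat n m hbar a (j + 1) r p p = (bval m hbar a j (k + 1) + hbar / 2) ^ r) ∨
    (∀ r, xiMat n m hbar a (j + 1) r q q = -(bval m hbar a j (k + 1) - hbar / 2) ^ r ∧
      xiMat n m hbar a (j + 1) r p p = 0) := by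
  by_cases hp : Occurs p (j + 1 + 1)
  · obtain ⟨l, hl⟩ := hp
    have hlk : l ≠ k := by rintro rfl; rw [h.1] at hl; omega
    have hkl : l.val = k.val + 1 := val_eq_succ_of_pv h.1 hl
    refine Or.inr fun r => ⟨?_, xiMat_self_eq_zero (iff_of_true ⟨k, h.1⟩ ⟨l, hl⟩)⟩
    rw [xiMat_self_of_upper ((h.pv_of_ne hlk).trans hl) h.not_occurs_succ, hkl, bval_succ_succ]
  · have hq : ¬ Occurs q (j + 1 + 1) := by
      rwa [h.occurs_iff (by omega) (by omega)]
    refine Or.inl fun r => ⟨xiMat_self_eq_zero (iff_of_false h.not_occurs_succ hq), ?_⟩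
    rw [xiMat_self_of_lower h.1 hp, bval_succ_left]

lemma xiMat_self_of_lowers_adjacent (h : Lowers j k p q) (hadj : i + 1 = j ∨ j + 1 = i) :
    (∀ r, xiMat n m hbar a i r q q = 0 ∧
      xiMat n m hbar a i r p p = (bval m hbar a j (k + 1) + hbar / 2) ^ r) ∨
    (∀ r, xiMat n m hbar a i r q q = -(bval m hbar a j (k + 1) - hbar / 2) ^ r ∧
      xiMat n m hbar a i r p p = 0) := by
  rcases hadj with rfl | rfl
  exacts [xiMat_self_of_lowers_succ h, xiMat_self_of_lowers_pred h]

lemma xiMat_self_of_lowers_far (h : Lowers j k p q) (hij : i ≠ j)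
    (hadj : ¬ (i + 1 = j ∨ j + 1 = i)) (r : ℕ) :
    xiMat n m hbar a i r q q = xiMat n m hbar a i r p p := by
  simp only [xiMat, if_true, h.pv_eq_iff hij (by omega),
    h.pv_eq_iff (w := i + 1) (by omega) (by omega), h.occurs_iff hij (by omega),
    h.occurs_iff (w := i + 1) (by omega) (by omega)]

lemma xiMat_zero_sub_of_lowers (h : Lowers j k p q) :
    xiMat n m hbar a i 0 q q - xiMat n m hbar a i 0 p p = cartan i j := by
  by_cases hij : i = j
  · subst hij
    obtain ⟨hq, hp⟩ := xiMat_self_of_lowers_self (hbar := hbar) (a := a) h 0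
    rw [hq, hp, cartan_self]
    ring
  by_cases hadj : i + 1 = j ∨ j + 1 = i
  · rw [cartan_of_adjacent hadj]
    rcases xiMat_self_of_lowers_adjacent (hbar := hbar) (a := a) h hadj with hw | hw <;>
      simp [hw]
  · rw [xiMat_self_of_lowers_far h hij hadj, sub_self, cartan_of_far hij hadj]

lemma xiMat_succ_sub_of_lowers (h : Lowers j k p q) (r : ℕ) :
    (xiMat n m hbar a i (r + 1) q q - xiMat n m hbar a i (r + 1) p p) -
        bval m hbar a j (k + 1) * (xiMat n m hbar a i r q q - xiMat n m hbar a i r p p) =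
      hbar * cartan i j / 2 * (xiMat n m hbar a i r q q + xiMat n m hbar a i r p p) := by
  by_cases hij : i = j
  · subst hij
    obtain ⟨hq, hp⟩ := xiMat_self_of_lowers_self (hbar := hbar) (a := a) h r
    obtain ⟨hq', hp'⟩ := xiMat_self_of_lowers_self (hbar := hbar) (a := a) h (r + 1)
    rw [hq, hp, hq', hp', cartan_self]
    ring
  by_cases hadj : i + 1 = j ∨ j + 1 = i
  · rw [cartan_of_adjacent hadj]
    rcases xiMat_self_of_lowers_adjacent (hbar := hbar) (a := a) h hadj with hw | hw <;>
      · rw [(hw r).1, (hw r).2, (hw (r + 1)).1, (hw (r + 1)).2]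
        ring
  · simp only [xiMat_self_of_lowers_far h hij hadj, cartan_of_far hij hadj]
    ring

end Weights

section Relations

variable (hbar a : ℂ) {i j : ℕ}

lemma xpMat_apply (i r : ℕ) (q p : Idx n m) :
    xpMat n m hbar a i r q p = ∑ k, if Lowers i k p q then bval m hbar a i (k + 1) ^ r else 0 := by
  refine Finset.sum_congr rfl fun k _ => if_congr ⟨?_, ?_⟩ rfl rfl
  · rintro ⟨hp, -, hq, hqp⟩
    exact ⟨hp, Function.eq_update_iff.2 ⟨hq, fun l hl => pv_eq_pv_iff.2 (hqp l hl)⟩⟩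
  · intro h
    exact ⟨h.1, h.not_occurs, h.pv_right, fun l hl => pv_eq_pv_iff.1 (h.pv_of_ne hl)⟩

lemma xmMat_eq_transpose (i r : ℕ) : xmMat n m hbar a i r = (xpMat n m hbar a i r)ᵀ := by
  ext q p
  rw [Matrix.transpose_apply, xpMat_apply]
  refine Finset.sum_congr rfl fun k _ => if_congr ⟨?_, ?_⟩ rfl rfl
  · rintro ⟨hp, -, hq, hqp⟩
    exact ⟨hq, Function.eq_update_iff.2 ⟨hp, fun l hl => (pv_eq_pv_iff.2 (hqp l hl)).symm⟩⟩
  · intro h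
    exact ⟨h.pv_right, h.not_occurs_succ, h.1, fun l hl => (pv_eq_pv_iff.1 (h.pv_of_ne hl)).symm⟩

lemma xiMat_eq_diagonal (i r : ℕ) :
    xiMat n m hbar a i r = Matrix.diagonal fun p => xiMat n m hbar a i r p p := by
  ext q p
  by_cases h : q = p
  · subst h; simp
  · simp [h, xiMat]

lemma xiMat_transpose (i r : ℕ) : (xiMat n m hbar a i r)ᵀ = xiMat n m hbar a i r := by
  rw [xiMat_eq_diagonal, Matrix.diagonal_transpose]

lemma xpMat_mul_xpMat_apply (i j r s : ℕ) (q p : Idx n m) :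
    (xpMat n m hbar a i r * xpMat n m hbar a j s) q p = ∑ l, ∑ k,
      if ∃ x, Lowers i l x q ∧ Lowers j k p x then
        bval m hbar a i (l + 1) ^ r * bval m hbar a j (k + 1) ^ s else 0 :=
  mul_apply_eq_sum_sum_ite (xpMat_apply hbar a i r) (fun x p => xpMat_apply hbar a j s x p)
    (fun _ _ _ _ hx hy => hx.unique_right hy) q p

lemma xpMat_mul_xmMat_apply (i j r s : ℕ) (q p : Idx n m) :
    (xpMat n m hbar a i r * xmMat n m hbar a j s) q p = ∑ l, ∑ k,
      if ∃ x, Lowers i l x q ∧ Lowers j k x p then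
        bval m hbar a i (l + 1) ^ r * bval m hbar a j (k + 1) ^ s else 0 :=
  mul_apply_eq_sum_sum_ite (Q := fun x p k => Lowers j k x p) (xpMat_apply hbar a i r)
    (fun x p => by rw [xmMat_eq_transpose, Matrix.transpose_apply, xpMat_apply])
    (fun _ _ _ _ hx hy => hx.unique_left hy) q p

lemma xmMat_mul_xpMat_apply (i j r s : ℕ) (q p : Idx n m) :
    (xmMat n m hbar a j s * xpMat n m hbar a i r) q p = ∑ k, ∑ l,
      if ∃ x, Lowers j k q x ∧ Lowers i l p x then
        bval m hbar a j (k + 1) ^ s * bval m hbar a i (l + 1) ^ r else 0 :=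
  mul_apply_eq_sum_sum_ite (P := fun q x k => Lowers j k q x)
    (fun q x => by rw [xmMat_eq_transpose, Matrix.transpose_apply, xpMat_apply])
    (xpMat_apply hbar a i r) (fun _ _ _ _ hx hy => hx.unique_right hy) q p

lemma xiMat_mul_xiMat_comm (i j r s : ℕ) :
    xiMat n m hbar a i r * xiMat n m hbar a j s = xiMat n m hbar a j s * xiMat n m hbar a i r := by
  rw [xiMat_eq_diagonal hbar a i r, xiMat_eq_diagonal hbar a j s, Matrix.diagonal_mul_diagonal,
    Matrix.diagonal_mul_diagonal]
  simp_rw [mul_comm]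

lemma xiMat_zero_commutator_xpMat (i j s : ℕ) :
    xiMat n m hbar a i 0 * xpMat n m hbar a j s - xpMat n m hbar a j s * xiMat n m hbar a i 0 =
      cartan i j • xpMat n m hbar a j s := by
  rw [xiMat_eq_diagonal]
  ext q p
  simp only [Matrix.sub_apply, Matrix.smul_apply, Matrix.diagonal_mul, Matrix.mul_diagonal,
    xpMat_apply, smul_eq_mul, Finset.mul_sum, Finset.sum_mul, ← Finset.sum_sub_distrib]
  refine Finset.sum_congr rfl fun k _ => ?_
  split_ifs with h
  · linear_combination
      bval m hbar a j (k + 1) ^ s * xiMat_zero_sub_of_lowers (hbar := hbar) (a := a) (i := i) h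
  · simp

lemma xiMat_commutator_xpMat_succ (i j r s : ℕ) :
    (xiMat n m hbar a i (r + 1) * xpMat n m hbar a j s -
          xpMat n m hbar a j s * xiMat n m hbar a i (r + 1)) -
        (xiMat n m hbar a i r * xpMat n m hbar a j (s + 1) -
          xpMat n m hbar a j (s + 1) * xiMat n m hbar a i r) =
      (hbar * cartan i j / 2) •
        (xiMat n m hbar a i r * xpMat n m hbar a j s +
          xpMat n m hbar a j s * xiMat n m hbar a i r) := by
  rw [xiMat_eq_diagonal hbar a i (r + 1), xiMat_eq_diagonal hbar a i r]
  ext q p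
  simp only [Matrix.sub_apply, Matrix.add_apply, Matrix.smul_apply, Matrix.diagonal_mul,
    Matrix.mul_diagonal, xpMat_apply, smul_eq_mul, Finset.mul_sum, Finset.sum_mul,
    ← Finset.sum_sub_distrib, ← Finset.sum_add_distrib]
  refine Finset.sum_congr rfl fun k _ => ?_
  split_ifs with h
  · linear_combination
      bval m hbar a j (k + 1) ^ s * xiMat_succ_sub_of_lowers (hbar := hbar) (a := a) (i := i) h r
  · simp

lemma xpMat_mul_xpMat_self (i r s : ℕ) :
    xpMat n m hbar a i r * xpMat n m hbar a i s = 0 := by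
  ext q p
  rw [xpMat_mul_xpMat_apply, Matrix.zero_apply]
  exact Finset.sum_eq_zero fun l _ => Finset.sum_eq_zero fun k _ =>
    if_neg fun ⟨_, hxq, hpx⟩ => hxq.not_occurs ⟨k, hpx.pv_right⟩

lemma xpMat_mul_xpMat_comm (hadj : ¬ (i + 1 = j ∨ j + 1 = i)) (r s : ℕ) :
    xpMat n m hbar a i r * xpMat n m hbar a j s = xpMat n m hbar a j s * xpMat n m hbar a i r := by
  ext q p
  rw [xpMat_mul_xpMat_apply, xpMat_mul_xpMat_apply, Finset.sum_comm]
  refine Finset.sum_congr rfl fun k _ => Finset.sum_congr rfl fun l _ => ?_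
  rw [mul_comm]
  refine if_congr ⟨fun ⟨x, hxq, hpx⟩ => ?_, fun ⟨y, hyq, hpy⟩ => ?_⟩ rfl rfl
  · obtain ⟨y, hpy, hyq⟩ := hpx.exchange hxq hadj
    exact ⟨y, hyq, hpy⟩
  · obtain ⟨x, hpx, hxq⟩ := hpy.exchange hyq (by omega)
    exact ⟨x, hxq, hpx⟩

lemma xpMat_mul_xpMat_shift (δ : ℂ) (hδ : ∀ (q p : Idx n m) l k,
      (∃ x, Lowers i l x q ∧ Lowers j k p x) →
        bval m hbar a j (k + 1) = bval m hbar a i (l + 1) + δ) (r s : ℕ) :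
    xpMat n m hbar a i (r + 1) * xpMat n m hbar a j s -
        xpMat n m hbar a i r * xpMat n m hbar a j (s + 1) =
      (-δ) • (xpMat n m hbar a i r * xpMat n m hbar a j s) := by
  ext q p
  simp only [Matrix.sub_apply, Matrix.smul_apply, xpMat_mul_xpMat_apply, smul_eq_mul,
    Finset.mul_sum, ← Finset.sum_sub_distrib]
  refine Finset.sum_congr rfl fun l _ => Finset.sum_congr rfl fun k _ => ?_
  split_ifs with hc
  · rw [hδ q p l k hc]
    ring
  · simp

lemma xpMat_commutator_xpMat_succ (i j r s : ℕ) :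
    (xpMat n m hbar a i (r + 1) * xpMat n m hbar a j s -
          xpMat n m hbar a j s * xpMat n m hbar a i (r + 1)) -
        (xpMat n m hbar a i r * xpMat n m hbar a j (s + 1) -
          xpMat n m hbar a j (s + 1) * xpMat n m hbar a i r) =
      (hbar * cartan i j / 2) •
        (xpMat n m hbar a i r * xpMat n m hbar a j s +
          xpMat n m hbar a j s * xpMat n m hbar a i r) := by
  by_cases hij : i = j
  · subst hij
    simp [xpMat_mul_xpMat_self]
  by_cases hadj : i + 1 = j ∨ j + 1 = i
  · have hshift := xpMat_mul_xpMat_shift (n := n) (m := m) hbar a (hbar / 2)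
      (fun _ _ _ _ ⟨_, hxq, hpx⟩ => bval_of_lowers_adjacent hadj hpx hxq) r s
    have hshift' := xpMat_mul_xpMat_shift (n := n) (m := m) hbar a (hbar / 2)
      (fun _ _ _ _ ⟨_, hxq, hpx⟩ => bval_of_lowers_adjacent hadj.symm hpx hxq) s r
    rw [cartan_of_adjacent hadj, show hbar * -1 / 2 = -(hbar / 2) by ring, smul_add, ← hshift,
      ← hshift']
    abel
  · simp [xpMat_mul_xpMat_comm hbar a hadj, cartan_of_far hij hadj]

lemma xpMat_mul_xmMat_comm (hij : i ≠ j) (r s : ℕ) :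
    xpMat n m hbar a i r * xmMat n m hbar a j s = xmMat n m hbar a j s * xpMat n m hbar a i r := by
  ext q p
  rw [xpMat_mul_xmMat_apply, xmMat_mul_xpMat_apply, Finset.sum_comm]
  refine Finset.sum_congr rfl fun k _ => Finset.sum_congr rfl fun l _ => ?_
  rw [mul_comm]
  exact if_congr ⟨fun ⟨x, hxq, hxp⟩ => hxq.diamond_down hxp hij,
    fun ⟨y, hqy, hpy⟩ => hqy.diamond_up hpy hij⟩ rfl rfl

lemma xpMat_mul_xmMat_of_adjacent (hadj : i + 1 = j ∨ j + 1 = i) (r s : ℕ) :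
    xpMat n m hbar a i r * xmMat n m hbar a j s = 0 := by
  ext q p
  rw [xpMat_mul_xmMat_apply, Matrix.zero_apply]
  refine Finset.sum_eq_zero fun l _ => Finset.sum_eq_zero fun k _ => if_neg ?_
  rintro ⟨x, hxq, hxp⟩
  rcases hadj with rfl | rfl
  exacts [hxp.not_occurs ⟨l, hxq.1⟩, hxq.not_occurs ⟨k, hxp.1⟩]

lemma xmMat_mul_xpMat_of_adjacent (hadj : i + 1 = j ∨ j + 1 = i) (r s : ℕ) :
    xmMat n m hbar a j s * xpMat n m hbar a i r = 0 := by
  ext q p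
  rw [xmMat_mul_xpMat_apply, Matrix.zero_apply]
  refine Finset.sum_eq_zero fun k _ => Finset.sum_eq_zero fun l _ => if_neg ?_
  rintro ⟨x, hqx, hpx⟩
  rcases hadj with rfl | rfl
  exacts [hpx.not_occurs_succ ⟨k, hqx.pv_right⟩, hqx.not_occurs_succ ⟨l, hpx.pv_right⟩]

lemma xpMat_mul_xmMat_self (hin : i < n) (r s : ℕ) :
    xpMat n m hbar a i r * xmMat n m hbar a i s = Matrix.diagonal fun p => ∑ l,
      if pv p l = i ∧ ¬ Occurs p (i + 1) then bval m hbar a i (l + 1) ^ (r + s) else 0 := by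
  have key : ∀ (q p : Idx n m) l k, (∃ x, Lowers i l x q ∧ Lowers i k x p) ↔
      q = p ∧ k = l ∧ pv p l = i ∧ ¬ Occurs p (i + 1) := by
    refine fun q p l k => ⟨fun ⟨x, hxq, hxp⟩ => ?_, ?_⟩
    · obtain rfl := pv_injective x (hxp.1.trans hxq.1.symm)
      obtain rfl := hxq.unique_right hxp
      exact ⟨rfl, rfl, hxq.pv_right, hxq.not_occurs_succ⟩
    · rintro ⟨rfl, rfl, hl, hno⟩
      obtain ⟨x, hx⟩ := exists_raises hl hno hin
      exact ⟨x, hx, hx⟩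
  ext q p
  simp_rw [xpMat_mul_xmMat_apply, key, Matrix.diagonal_apply]
  by_cases hqp : q = p
  · subst hqp
    simp [ite_and, pow_add]
  · simp [hqp]

lemma xmMat_mul_xpMat_self (hi : 1 ≤ i) (r s : ℕ) :
    xmMat n m hbar a i s * xpMat n m hbar a i r = Matrix.diagonal fun p => ∑ l,
      if pv p l = i + 1 ∧ ¬ Occurs p i then bval m hbar a i (l + 1) ^ (r + s) else 0 := by
  have key : ∀ (q p : Idx n m) l k, (∃ x, Lowers i k q x ∧ Lowers i l p x) ↔
      q = p ∧ k = l ∧ pv p l = i + 1 ∧ ¬ Occurs p i := by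
    refine fun q p l k => ⟨fun ⟨x, hqx, hpx⟩ => ?_, ?_⟩
    · obtain rfl := pv_injective x (hqx.pv_right.trans hpx.pv_right.symm)
      obtain rfl := hqx.unique_left hpx
      exact ⟨rfl, rfl, hqx.1, hqx.not_occurs⟩
    · rintro ⟨rfl, rfl, hl, hno⟩
      obtain ⟨x, hx⟩ := exists_lowers hl hno hi
      exact ⟨x, hx, hx⟩
  ext q p
  simp_rw [xmMat_mul_xpMat_apply, key, Matrix.diagonal_apply]
  by_cases hqp : q = p
  · subst hqp
    simp [ite_and, pow_add, mul_comm]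
  · simp [hqp]

lemma xpMat_commutator_xmMat (hi : 1 ≤ i) (hin : i < n) (j r s : ℕ) :
    xpMat n m hbar a i r * xmMat n m hbar a j s - xmMat n m hbar a j s * xpMat n m hbar a i r =
      if i = j then xiMat n m hbar a i (r + s) else 0 := by
  by_cases hij : i = j
  · subst hij
    rw [if_pos rfl, xpMat_mul_xmMat_self hbar a hin, xmMat_mul_xpMat_self hbar a hi,
      Matrix.diagonal_sub, xiMat_eq_diagonal]
    simp [xiMat]
  rw [if_neg hij]
  by_cases hadj : i + 1 = j ∨ j + 1 = i
  · rw [xpMat_mul_xmMat_of_adjacent hbar a hadj, xmMat_mul_xpMat_of_adjacent hbar a hadj, sub_zero]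
  · rw [xpMat_mul_xmMat_comm hbar a hij, sub_self]

lemma xiMat_zero_commutator_xmMat (i j s : ℕ) :
    xiMat n m hbar a i 0 * xmMat n m hbar a j s - xmMat n m hbar a j s * xiMat n m hbar a i 0 =
      (-cartan i j) • xmMat n m hbar a j s := by
  simpa only [xiMat_transpose, ← xmMat_eq_transpose] using
    transpose_commutator_eq_smul (xiMat_zero_commutator_xpMat hbar a i j s)

lemma xiMat_commutator_xmMat_succ (i j r s : ℕ) :
    (xiMat n m hbar a i (r + 1) * xmMat n m hbar a j s -
          xmMat n m hbar a j s * xiMat n m hbar a i (r + 1)) -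
        (xiMat n m hbar a i r * xmMat n m hbar a j (s + 1) -
          xmMat n m hbar a j (s + 1) * xiMat n m hbar a i r) =
      (-(hbar * cartan i j / 2)) •
        (xiMat n m hbar a i r * xmMat n m hbar a j s +
          xmMat n m hbar a j s * xiMat n m hbar a i r) := by
  simpa only [xiMat_transpose, ← xmMat_eq_transpose] using
    transpose_shifted_commutator_eq_smul (xiMat_commutator_xpMat_succ hbar a i j r s)

lemma xmMat_commutator_xmMat_succ (i j r s : ℕ) :
    (xmMat n m hbar a i (r + 1) * xmMat n m hbar a j s -
          xmMat n m hbar a j s * xmMat n m hbar a i (r + 1)) -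
        (xmMat n m hbar a i r * xmMat n m hbar a j (s + 1) -
          xmMat n m hbar a j (s + 1) * xmMat n m hbar a i r) =
      (-(hbar * cartan i j / 2)) •
        (xmMat n m hbar a i r * xmMat n m hbar a j s +
          xmMat n m hbar a j s * xmMat n m hbar a i r) := by
  simpa only [← xmMat_eq_transpose] using
    transpose_shifted_commutator_eq_smul (xpMat_commutator_xpMat_succ hbar a i j r s)

lemma xpMat_apply_pOmega (h : m ≤ n) (i r : ℕ) (q : Idx n m) :
    xpMat n m hbar a i r q (pOmega n m h) = 0 := by
  rw [xpMat_apply]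
  refine Finset.sum_eq_zero fun k _ => if_neg fun hk => ?_
  have hki : k.val = i := by have := hk.1; simp only [pv, pOmega] at this; omega
  have := hk.one_le
  exact hk.not_occurs ⟨⟨i - 1, by omega⟩, by simp only [pv, pOmega]; omega⟩

lemma xiMat_self_pOmega (h : m ≤ n) {i : ℕ} (hi : 1 ≤ i) (r : ℕ) :
    xiMat n m hbar a i r (pOmega n m h) (pOmega n m h) = if i = m then a ^ r else 0 := by
  have hpv : ∀ k, pv (pOmega n m h) k = k + 1 := fun _ => rfl
  rcases lt_trichotomy i m with him | rfl | him
  · rw [if_neg him.ne]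
    exact xiMat_self_eq_zero (iff_of_true ⟨⟨i - 1, by omega⟩, by rw [hpv]; simp only; omega⟩
      ⟨⟨i, him⟩, hpv _⟩)
  · rw [if_pos rfl, xiMat_self_of_lower (k := ⟨i - 1, by omega⟩) (by rw [hpv]; simp only; omega)
      fun ⟨l, hl⟩ => by rw [hpv] at hl; omega]
    unfold bval
    congr 1
    push_cast [Nat.sub_add_cancel hi]
    ring
  · rw [if_neg him.ne']
    exact xiMat_self_eq_zero (iff_of_false (fun ⟨l, hl⟩ => by rw [hpv] at hl; omega)
      fun ⟨l, hl⟩ => by rw [hpv] at hl; omega)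

end Relations

theorem yangian_sln_fundamental_relations_general
    (n m : ℕ) (hm₂ : m ≤ n - 1) (hbar a : ℂ) :
    (∀ i j : ℕ, 1 ≤ i → i ≤ n - 1 → 1 ≤ j → j ≤ n - 1 → ∀ r s : ℕ,
      -- (Y1)
      Xi n m hbar a i r * Xi n m hbar a j s = Xi n m hbar a j s * Xi n m hbar a i r ∧
      -- (Y2), both signs
      Xi n m hbar a i 0 * Xp n m hbar a j s - Xp n m hbar a j s * Xi n m hbar a i 0 =
        cartan i j • Xp n m hbar a j s ∧
      Xi n m hbar a i 0 * Xm n m hbar a j s - Xm n m hbar a j s * Xi n m hbar a i 0 =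
        (-(cartan i j)) • Xm n m hbar a j s ∧
      -- (Y3), both signs
      (Xi n m hbar a i (r + 1) * Xp n m hbar a j s -
            Xp n m hbar a j s * Xi n m hbar a i (r + 1)) -
          (Xi n m hbar a i r * Xp n m hbar a j (s + 1) -
            Xp n m hbar a j (s + 1) * Xi n m hbar a i r) =
        (hbar * cartan i j / 2) •
          (Xi n m hbar a i r * Xp n m hbar a j s + Xp n m hbar a j s * Xi n m hbar a i r) ∧
      (Xi n m hbar a i (r + 1) * Xm n m hbar a j s -
            Xm n m hbar a j s * Xi n m hbar a i (r + 1)) -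
          (Xi n m hbar a i r * Xm n m hbar a j (s + 1) -
            Xm n m hbar a j (s + 1) * Xi n m hbar a i r) =
        (-(hbar * cartan i j / 2)) •
          (Xi n m hbar a i r * Xm n m hbar a j s + Xm n m hbar a j s * Xi n m hbar a i r) ∧
      -- (Y4), both signs
      (Xp n m hbar a i (r + 1) * Xp n m hbar a j s -
            Xp n m hbar a j s * Xp n m hbar a i (r + 1)) -
          (Xp n m hbar a i r * Xp n m hbar a j (s + 1) -
            Xp n m hbar a j (s + 1) * Xp n m hbar a i r) =
        (hbar * cartan i j / 2) •
          (Xp n m hbar a i r * Xp n m hbar a j s + Xp n m hbar a j s * Xp n m hbar a i r) ∧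
      (Xm n m hbar a i (r + 1) * Xm n m hbar a j s -
            Xm n m hbar a j s * Xm n m hbar a i (r + 1)) -
          (Xm n m hbar a i r * Xm n m hbar a j (s + 1) -
            Xm n m hbar a j (s + 1) * Xm n m hbar a i r) =
        (-(hbar * cartan i j / 2)) •
          (Xm n m hbar a i r * Xm n m hbar a j s + Xm n m hbar a j s * Xm n m hbar a i r) ∧
      -- (Y5)
      Xp n m hbar a i r * Xm n m hbar a j s - Xm n m hbar a j s * Xp n m hbar a i r =
        (if i = j then Xi n m hbar a i (r + s) else 0)) ∧
    (∀ i r : ℕ, 1 ≤ i → i ≤ n - 1 →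
      Xp n m hbar a i r (Omega n m (le_trans hm₂ (Nat.sub_le n 1))) = 0) ∧
    (∀ i r : ℕ, 1 ≤ i → i ≤ n - 1 →
      Xi n m hbar a i r (Omega n m (le_trans hm₂ (Nat.sub_le n 1))) =
        (if i = m then a ^ r else 0) • Omega n m (le_trans hm₂ (Nat.sub_le n 1))) := by
  refine ⟨fun i j hi hin _ _ r s => ?_, fun i r _ _ => ?_, fun i r hi _ => ?_⟩
  · simp only [Xi, Xp, Xm, ← toLin'_mul_eq_mul, ← map_sub, ← map_add, ← map_smul]
    refine ⟨congrArg _ (xiMat_mul_xiMat_comm hbar a i j r s),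
      congrArg _ (xiMat_zero_commutator_xpMat hbar a i j s),
      congrArg _ (xiMat_zero_commutator_xmMat hbar a i j s),
      congrArg _ (xiMat_commutator_xpMat_succ hbar a i j r s),
      congrArg _ (xiMat_commutator_xmMat_succ hbar a i j r s),
      congrArg _ (xpMat_commutator_xpMat_succ hbar a i j r s),
      congrArg _ (xmMat_commutator_xmMat_succ hbar a i j r s), ?_⟩
    rw [xpMat_commutator_xmMat hbar a hi (by omega), apply_ite Matrix.toLin', map_zero]
  · ext q
    simp [Xp, Omega, Matrix.toLin'_apply, xpMat_apply_pOmega]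
  · ext q
    rw [Xi, Omega, Matrix.toLin'_apply, xiMat_eq_diagonal, Matrix.diagonal_mulVec_single,
      xiMat_self_pOmega hbar a _ hi]
    simp [Pi.single_apply]

/-- The operators `ξ_{i,r}, x^±_{i,r}` satisfy the defining relations
(Y1)–(Y5) of the Yangian `Y_ħ(sl_n)`, and `Ω = |(1,…,m)⟩` is a highest-weight vector with
`x⁺_{i,r}Ω = 0` and `ξ_{i,r}Ω = δ_{i,m}·a^r·Ω`. -/
theorem yangian_sln_fundamental_relations
    (n m : ℕ) (hn : 2 ≤ n) (hm₁ : 1 ≤ m) (hm₂ : m ≤ n - 1) (hbar a : ℂ) :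
    (∀ i j : ℕ, 1 ≤ i → i ≤ n - 1 → 1 ≤ j → j ≤ n - 1 → ∀ r s : ℕ,
      -- (Y1)
      Xi n m hbar a i r * Xi n m hbar a j s = Xi n m hbar a j s * Xi n m hbar a i r ∧
      -- (Y2), both signs
      Xi n m hbar a i 0 * Xp n m hbar a j s - Xp n m hbar a j s * Xi n m hbar a i 0 =
        cartan i j • Xp n m hbar a j s ∧
      Xi n m hbar a i 0 * Xm n m hbar a j s - Xm n m hbar a j s * Xi n m hbar a i 0 =
        (-(cartan i j)) • Xm n m hbar a j s ∧
      -- (Y3), both signs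
      (Xi n m hbar a i (r + 1) * Xp n m hbar a j s -
            Xp n m hbar a j s * Xi n m hbar a i (r + 1)) -
          (Xi n m hbar a i r * Xp n m hbar a j (s + 1) -
            Xp n m hbar a j (s + 1) * Xi n m hbar a i r) =
        (hbar * cartan i j / 2) •
          (Xi n m hbar a i r * Xp n m hbar a j s + Xp n m hbar a j s * Xi n m hbar a i r) ∧
      (Xi n m hbar a i (r + 1) * Xm n m hbar a j s -
            Xm n m hbar a j s * Xi n m hbar a i (r + 1)) -
          (Xi n m hbar a i r * Xm n m hbar a j (s + 1) -
            Xm n m hbar a j (s + 1) * Xi n m hbar a i r) =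
        (-(hbar * cartan i j / 2)) •
          (Xi n m hbar a i r * Xm n m hbar a j s + Xm n m hbar a j s * Xi n m hbar a i r) ∧
      -- (Y4), both signs
      (Xp n m hbar a i (r + 1) * Xp n m hbar a j s -
            Xp n m hbar a j s * Xp n m hbar a i (r + 1)) -
          (Xp n m hbar a i r * Xp n m hbar a j (s + 1) -
            Xp n m hbar a j (s + 1) * Xp n m hbar a i r) =
        (hbar * cartan i j / 2) •
          (Xp n m hbar a i r * Xp n m hbar a j s + Xp n m hbar a j s * Xp n m hbar a i r) ∧
      (Xm n m hbar a i (r + 1) * Xm n m hbar a j s -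
            Xm n m hbar a j s * Xm n m hbar a i (r + 1)) -
          (Xm n m hbar a i r * Xm n m hbar a j (s + 1) -
            Xm n m hbar a j (s + 1) * Xm n m hbar a i r) =
        (-(hbar * cartan i j / 2)) •
          (Xm n m hbar a i r * Xm n m hbar a j s + Xm n m hbar a j s * Xm n m hbar a i r) ∧
      -- (Y5)
      Xp n m hbar a i r * Xm n m hbar a j s - Xm n m hbar a j s * Xp n m hbar a i r =
        (if i = j then Xi n m hbar a i (r + s) else 0)) ∧
    (∀ i r : ℕ, 1 ≤ i → i ≤ n - 1 →
      Xp n m hbar a i r (Omega n m (le_trans hm₂ (Nat.sub_le n 1))) = 0) ∧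
    (∀ i r : ℕ, 1 ≤ i → i ≤ n - 1 →
      Xi n m hbar a i r (Omega n m (le_trans hm₂ (Nat.sub_le n 1))) =
        (if i = m then a ^ r else 0) • Omega n m (le_trans hm₂ (Nat.sub_le n 1))) :=
  yangian_sln_fundamental_relations_general n m hm₂ hbar a

end YangianSlnFund

end
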